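/- Let H be the entropy function of jointly distributed random variables, with K independent files W_1,...,W_K each of entropy 1, and let Z_1,...,Z_K, X^1,...,X^K be functions of (W_1,...,W_K) such that for each i, the pair (Z_{K+1-i}, X^{[K]\{i}}) determines W_1,...,W_{K-1}, and (Z_{K+1-i}, X^i) determines W_K. Then the sum over i of H(Z_{K+1-i}) + H(X^{[K]\{i}}) is at least K² - 1. -/
import Mathlib


open Finset

/-- broadcast symbols for a set of indices -/
def keXs (K : ℕ) (S : Finset (Fin K)) : Finset (Fin K ⊕ (Fin K ⊕ Fin K)) :=
  S.image (fun j => Sum.inr (Sum.inr j))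

/-- the first K-1 files -/
def keWp (K : ℕ) : Finset (Fin K ⊕ (Fin K ⊕ Fin K)) :=
  (Finset.univ.filter (fun n : Fin K => (n : ℕ) < K - 1)).image Sum.inl

/-- cache symbol -/
def keZ (K : ℕ) (i : Fin K) : Fin K ⊕ (Fin K ⊕ Fin K) := Sum.inr (Sum.inl i.rev)

/-- broadcast symbol -/
def keX (K : ℕ) (i : Fin K) : Fin K ⊕ (Fin K ⊕ Fin K) := Sum.inr (Sum.inr i)

/-- cache i together with all broadcasts except X^i -/
def keA (K : ℕ) (i : Fin K) : Finset (Fin K ⊕ (Fin K ⊕ Fin K)) :=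
  insert (keZ K i) (keXs K (Finset.univ.erase i))


/-- The key entropy inequality underlying Theorem 2. Let H be an entropy-like function
(submodular, monotone, H(∅)=0) on the ground set of K independent unit-entropy files
(`Sum.inl`), K caches Z_k (`Sum.inr ∘ Sum.inl`) and K broadcasts X^i (`Sum.inr ∘ Sum.inr`),
all functions of the files, such that for each i the pair (Z_{K+1-i}, X^{[K]\{i}})
determines W_1,…,W_{K-1}, and (Z_{K+1-i}, X^i) determines W_K. Then
∑_i ( H(Z_{K+1-i}) + H(X^{[K]\{i}}) ) ≥ K² - 1. -/
theorem key_entropy_inequality (K : ℕ) (hK : 2 ≤ K)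
    (H : Finset (Fin K ⊕ (Fin K ⊕ Fin K)) → ℝ)
    (hempty : H ∅ = 0)
    (hmono : ∀ A B, A ⊆ B → H A ≤ H B)
    (hsub : ∀ A B, H A + H B ≥ H (A ∪ B) + H (A ∩ B))
    -- files are independent with unit entropy each
    (hfiles : ∀ s : Finset (Fin K), H (s.image Sum.inl) = s.card)
    -- caches and broadcasts are functions of the files
    (hfun : ∀ A, H (A ∪ (Finset.univ.image Sum.inl)) = H (Finset.univ.image Sum.inl))
    -- (Z_{K+1-i}, X^{[K]\{i}}) determines W_1, …, W_{K-1}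
    (hdecAll : ∀ i : Fin K,
      H ((insert (Sum.inr (Sum.inl i.rev))
            ((Finset.univ.erase i).image (fun j => Sum.inr (Sum.inr j))))
          ∪ ((Finset.univ.filter (fun n : Fin K => (n : ℕ) < K - 1)).image Sum.inl))
      = H (insert (Sum.inr (Sum.inl i.rev))
            ((Finset.univ.erase i).image (fun j => Sum.inr (Sum.inr j)))))
    -- (Z_{K+1-i}, X^i) determines W_K
    (hdecK : ∀ i : Fin K,
      H (insert (Sum.inl (⟨K - 1, by omega⟩ : Fin K))
          ({Sum.inr (Sum.inl i.rev), Sum.inr (Sum.inr i)} : Finset _))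
      = H ({Sum.inr (Sum.inl i.rev), Sum.inr (Sum.inr i)} : Finset _)) :
    ∑ i : Fin K,
        (H {Sum.inr (Sum.inl i.rev)}
          + H ((Finset.univ.erase i).image (fun j => Sum.inr (Sum.inr j))))
      ≥ (K : ℝ)^2 - 1 := by
  classical
  have hfilter : Finset.univ.filter (fun n : Fin K => (n : ℕ) < K - 1)
      = Finset.univ.erase (⟨K-1, by omega⟩ : Fin K) := by
    ext n
    simp [Fin.ext_iff]
    have := n.isLt
    omega
  have hWp : H (keWp K) = (K : ℝ) - 1 := by
    have h := hfiles (Finset.univ.filter (fun n : Fin K => (n : ℕ) < K - 1))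
    rw [hfilter] at h
    show H ((Finset.univ.filter (fun n : Fin K => (n : ℕ) < K - 1)).image Sum.inl) = _
    rw [hfilter, h, Finset.card_erase_of_mem (mem_univ _), Finset.card_univ, Fintype.card_fin]
    push_cast [Nat.cast_sub (by omega : 1 ≤ K)]
    ring
  have hWall : H (Finset.univ.image Sum.inl) = (K : ℝ) := by
    rw [hfiles, Finset.card_univ, Fintype.card_fin]
  have hinsWp : insert (Sum.inl (⟨K - 1, by omega⟩ : Fin K)) (keWp K)
      = Finset.univ.image Sum.inl := by
    ext x
    rcases x with a | b
    · simp only [keWp, mem_insert, mem_image, mem_filter, mem_univ, true_and,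
        Sum.inl.injEq, Fin.ext_iff]
      constructor
      · rintro _; exact ⟨a, rfl⟩
      · rintro _
        have := a.isLt
        by_cases h : (a : ℕ) < K - 1
        · exact Or.inr ⟨a, h, rfl⟩
        · left; omega
    · simp [keWp]
  -- Key fact 1: the pair (Z i, X i) together with the first K-1 files has entropy ≥ K
  have hpair : ∀ i : Fin K, (K : ℝ) ≤ H (({keZ K i, keX K i} : Finset _) ∪ keWp K) := by
    intro i
    have h1 := hdecK i
    have h2 := hsub (({keZ K i, keX K i} : Finset _) ∪ keWp K)
      (insert (Sum.inl (⟨K - 1, by omega⟩ : Fin K)) {keZ K i, keX K i})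
    have h3 : H (Finset.univ.image Sum.inl)
        ≤ H ((({keZ K i, keX K i} : Finset _) ∪ keWp K)
            ∪ insert (Sum.inl (⟨K - 1, by omega⟩ : Fin K)) {keZ K i, keX K i}) := by
      apply hmono
      rw [← hinsWp]
      intro x hx
      rcases Finset.mem_insert.1 hx with h | h
      · exact Finset.mem_union_right _ (h ▸ Finset.mem_insert_self _ _)
      · exact Finset.mem_union_left _ (Finset.mem_union_right _ h)
    have h4 : H ({keZ K i, keX K i} : Finset _)
        ≤ H ((({keZ K i, keX K i} : Finset _) ∪ keWp K)
            ∩ insert (Sum.inl (⟨K - 1, by omega⟩ : Fin K)) {keZ K i, keX K i}) := by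
      apply hmono
      intro x hx
      exact Finset.mem_inter.2 ⟨Finset.mem_union_left _ hx, Finset.mem_insert_of_mem hx⟩
    rw [hWall] at h3
    have h1' : H (insert (Sum.inl (⟨K - 1, by omega⟩ : Fin K))
        ({keZ K i, keX K i} : Finset _)) = H ({keZ K i, keX K i} : Finset _) := h1
    linarith
  -- Key fact 2 (induction): chain of submodular steps
  have key : ∀ S : Finset (Fin K), S.Nonempty →
      (S.card : ℝ) - 1 + H (keXs K (Finset.univ \ S) ∪ keWp K)
        ≤ ∑ i ∈ S, (H (keA K i ∪ keWp K) - ((K : ℝ) - 1)) + ((K : ℝ) - 1) := by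
    intro S hS
    induction hS using Finset.Nonempty.cons_induction with
    | singleton a =>
      simp only [Finset.sum_singleton, Finset.card_singleton]
      have hsub1 : keXs K (Finset.univ \ {a}) ∪ keWp K ⊆ keA K a ∪ keWp K := by
        apply Finset.union_subset_union_left
        refine Finset.Subset.trans ?_ (Finset.subset_insert _ _)
        apply Finset.image_subset_image
        intro x hx
        simp only [Finset.mem_sdiff, Finset.mem_singleton] at hx
        exact Finset.mem_erase.2 ⟨hx.2, mem_univ _⟩
      have := hmono _ _ hsub1
      push_cast
      linarith
    | cons a S ha hSne ih =>
      have hstep : H (keA K a ∪ keWp K) + H (keXs K (Finset.univ \ S) ∪ keWp K)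
          ≥ (K : ℝ) + H (keXs K (Finset.univ \ insert a S) ∪ keWp K) := by
        have h2 := hsub (keA K a ∪ keWp K) (keXs K (Finset.univ \ S) ∪ keWp K)
        have h3 : (K : ℝ) ≤ H ((keA K a ∪ keWp K) ∪ (keXs K (Finset.univ \ S) ∪ keWp K)) := by
          refine le_trans (hpair a) (hmono _ _ ?_)
          intro x hx
          rcases Finset.mem_union.1 hx with h | h
          · rcases Finset.mem_insert.1 h with h | h
            · subst h
              exact Finset.mem_union_left _ (Finset.mem_union_left _ (Finset.mem_insert_self _ _))
            · rw [Finset.mem_singleton] at h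
              subst h
              refine Finset.mem_union_right _ (Finset.mem_union_left _ ?_)
              exact Finset.mem_image_of_mem _ (by simp [ha])
          · exact Finset.mem_union_left _ (Finset.mem_union_right _ h)
        have h4 : H (keXs K (Finset.univ \ insert a S) ∪ keWp K)
            ≤ H ((keA K a ∪ keWp K) ∩ (keXs K (Finset.univ \ S) ∪ keWp K)) := by
          apply hmono
          intro x hx
          rcases Finset.mem_union.1 hx with h | h
          · simp only [keXs, Finset.mem_image] at h
            obtain ⟨t, ht, rfl⟩ := h
            simp only [Finset.mem_sdiff, Finset.mem_insert, mem_univ, true_and,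
              not_or] at ht
            refine Finset.mem_inter.2 ⟨?_, ?_⟩
            · refine Finset.mem_union_left _ (Finset.mem_insert_of_mem ?_)
              exact Finset.mem_image_of_mem _ (Finset.mem_erase.2 ⟨ht.1, mem_univ _⟩)
            · refine Finset.mem_union_left _ ?_
              exact Finset.mem_image_of_mem _ (by simp [ht.2])
          · exact Finset.mem_inter.2 ⟨Finset.mem_union_right _ h, Finset.mem_union_right _ h⟩
        linarith
      rw [Finset.sum_cons, Finset.card_cons]
      push_cast
      have hcons : (Finset.univ \ Finset.cons a S ha) = Finset.univ \ insert a S := by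
        rw [Finset.cons_eq_insert]
      rw [hcons]
      linarith
  -- per-term bound
  have hterm : ∀ i : Fin K,
      H (keA K i ∪ keWp K) ≤ H {keZ K i} + H (keXs K (Finset.univ.erase i)) := by
    intro i
    have h1 : H (keA K i ∪ keWp K) = H (keA K i) := hdecAll i
    have h2 := hsub ({keZ K i} : Finset _) (keXs K (Finset.univ.erase i))
    have h3 : ({keZ K i} : Finset _) ∪ keXs K (Finset.univ.erase i) = keA K i :=
      (Finset.insert_eq _ _).symm
    have h4 : ({keZ K i} : Finset _) ∩ keXs K (Finset.univ.erase i) = ∅ := by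
      ext x
      simp only [Finset.mem_inter, Finset.mem_singleton, keXs, keZ, Finset.mem_image,
        Finset.notMem_empty, iff_false, not_and]
      rintro rfl ⟨t, _, h⟩
      simp at h
    rw [h3, h4, hempty] at h2
    linarith
  -- assemble
  have hne : Nonempty (Fin K) := ⟨⟨0, by omega⟩⟩
  have hkeyuniv := key Finset.univ Finset.univ_nonempty
  rw [Finset.sdiff_self] at hkeyuniv
  have hXs0 : keXs K (∅ : Finset (Fin K)) ∪ keWp K = keWp K := by simp [keXs]
  rw [hXs0, hWp, Finset.card_univ, Fintype.card_fin] at hkeyuniv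
  have hsum : ∑ i : Fin K, (H (keA K i ∪ keWp K) - ((K : ℝ) - 1))
      = ∑ i : Fin K, H (keA K i ∪ keWp K) - (K : ℝ) * ((K : ℝ) - 1) := by
    rw [Finset.sum_sub_distrib, Finset.sum_const, Finset.card_univ, Fintype.card_fin,
      nsmul_eq_mul]
  rw [hsum] at hkeyuniv
  have hfinal : ∑ i : Fin K, H (keA K i ∪ keWp K)
      ≤ ∑ i : Fin K, (H {keZ K i} + H (keXs K (Finset.univ.erase i))) :=
    Finset.sum_le_sum (fun i _ => hterm i)
  calc ∑ i : Fin K, (H {Sum.inr (Sum.inl i.rev)}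
          + H ((Finset.univ.erase i).image (fun j => Sum.inr (Sum.inr j))))
      = ∑ i : Fin K, (H {keZ K i} + H (keXs K (Finset.univ.erase i))) := rfl
    _ ≥ ∑ i : Fin K, H (keA K i ∪ keWp K) := hfinal
    _ ≥ (K : ℝ)^2 - 1 := by nlinarith [hkeyuniv]
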